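/- For natural numbers n, m ≥ 12 with n ≠ m, the closed intervals [1/n − n/2^n, 1/n + n/2^n] and [1/m − m/2^m, 1/m + m/2^m] are disjoint. -/

import Mathlib

lemma key_pow : ∀ n : ℕ, 12 ≤ n → n * (n + 1) * (3 * n + 1) < 2 ^ (n + 1) := by
  intro n hn
  induction n, hn using Nat.le_induction with
  | base => norm_num
  | succ n hn ih =>
    have h2 : 2 ^ (n + 1 + 1) = 2 * 2 ^ (n + 1) := by ring
    nlinarith [ih, hn, sq_nonneg n, Nat.one_le_two_pow (n := n+1)]

lemma mono_div : ∀ a b : ℕ, 1 ≤ a → a ≤ b → (b : ℝ) / 2 ^ b ≤ (a : ℝ) / 2 ^ a := by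
  intro a b ha hab
  induction b, hab using Nat.le_induction with
  | base => exact le_refl _
  | succ b hb ih =>
    refine le_trans ?_ ih
    have hpos : (0:ℝ) < 2 ^ b := by positivity
    rw [div_le_div_iff₀ (by positivity) hpos]
    have hb1 : (1:ℝ) ≤ b := by exact_mod_cast le_trans ha hb
    push_cast
    rw [pow_succ]
    nlinarith [hpos, hb1]

lemma gap (n m : ℕ) (hn : 12 ≤ n) (hlt : n < m) :
    (1 : ℝ) / m + m / 2 ^ m < 1 / n - n / 2 ^ n := by
  have hn0 : (0:ℝ) < n := by exact_mod_cast (by omega : 0 < n)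
  have hn1 : (0:ℝ) < (n:ℝ) + 1 := by linarith
  have hm0 : (0:ℝ) < m := by linarith [hn0, (by exact_mod_cast hlt.le : (n:ℝ) ≤ m)]
  have h1 : (m : ℝ) / 2 ^ m ≤ ((n + 1 : ℕ) : ℝ) / 2 ^ (n + 1) :=
    mono_div (n + 1) m (by omega) (by omega)
  push_cast at h1
  have h2 : (1 : ℝ) / m ≤ 1 / ((n : ℝ) + 1) := by
    apply one_div_le_one_div_of_le hn1
    exact_mod_cast hlt
  have key := key_pow n hn
  have keyR : ((n : ℝ)) * (n + 1) * (3 * n + 1) < 2 ^ (n + 1) := by exact_mod_cast key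
  have h3 : (n : ℝ) / 2 ^ n + ((n : ℝ) + 1) / 2 ^ (n + 1)
      < 1 / n - 1 / ((n : ℝ) + 1) := by
    have e1 : (n : ℝ) / 2 ^ n + ((n : ℝ) + 1) / 2 ^ (n + 1)
        = (3 * n + 1) / 2 ^ (n + 1) := by
      rw [pow_succ]
      field_simp
      ring
    have e2 : (1 : ℝ) / n - 1 / ((n : ℝ) + 1) = 1 / ((n : ℝ) * (n + 1)) := by
      field_simp
      ring
    rw [e1, e2]
    rw [div_lt_div_iff₀ (by positivity) (by positivity)]
    nlinarith [keyR]
  linarith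

open Set in
/-- Distinct catenoid slabs are disjoint: for `n, m ≥ 12`, `n ≠ m`, the
intervals `[1/n − n/2ⁿ, 1/n + n/2ⁿ]` and `[1/m − m/2ᵐ, 1/m + m/2ᵐ]` are
disjoint. -/
theorem stmt_10 (n m : ℕ) (hn : 12 ≤ n) (hm : 12 ≤ m) (hnm : n ≠ m) :
    Disjoint
      (Icc ((1 : ℝ) / n - n / 2 ^ n) ((1 : ℝ) / n + n / 2 ^ n))
      (Icc ((1 : ℝ) / m - m / 2 ^ m) ((1 : ℝ) / m + m / 2 ^ m)) := by
  rw [Set.disjoint_left]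
  intro x hx hx'
  simp only [Set.mem_Icc] at hx hx'
  rcases lt_or_gt_of_ne hnm with h | h
  · have := gap n m hn h
    linarith [hx.1, hx'.2]
  · have := gap m n hm h
    linarith [hx.2, hx'.1]
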